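/- arXiv:math/9801004 — 3 statements merged into one kernel-verified Lean document; each statement's English description precedes it below -/
import Mathlib

section
/- Let R be a commutative ring, let r ≥ 0, and let H be a formal multivariate polynomial (or formal power series) over R in the 2(r+1) variables t_0^0, …, t_0^r, t_1^0, …, t_1^r. Let η = (η^{αβ}) be a symmetric (r+1)×(r+1) matrix over R. Suppose H satisfies the genus-zero topological recursion relations: for all α₁, α₂, α₃ ∈ {0, …, r}, ∂³H/∂t_1^{α₁}∂t_0^{α₂}∂t_0^{α₃} = Σ_{σ₁,σ₂=0}^{r} (∂²H/∂t_0^{α₁}∂t_0^{σ₁}) · η^{σ₁σ₂} · (∂³H/∂t_0^{σ₂}∂t_0^{α₂}∂t_0^{α₃}). Then H satisfies the WDVV equations in the t_0-variables: for all a, b, c, d ∈ {0, …, r}, Σ_{e,f=0}^{r} (∂³H/∂t_0^{a}∂t_0^{b}∂t_0^{e}) · η^{ef} · (∂³H/∂t_0^{f}∂t_0^{c}∂t_0^{d}) = Σ_{e,f=0}^{r} (∂³H/∂t_0^{b}∂t_0^{c}∂t_0^{e}) · η^{ef} · (∂³H/∂t_0^{f}∂t_0^{a}∂t_0^{d}).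 -/
open MvPolynomial

lemma my_pderiv_comm {R σ : Type*} [CommSemiring R] (i j : σ) (p : MvPolynomial σ R) :
    pderiv i (pderiv j p) = pderiv j (pderiv i p) := by
  classical
  induction p using MvPolynomial.induction_on with
  | C a => simp [pderiv_C]
  | add p q hp hq => simp [hp, hq]
  | mul_X p n hp =>
      simp only [pderiv_mul, map_add, hp]
      have hi : pderiv i (pderiv j (X n : MvPolynomial σ R)) = 0 := by
        rcases eq_or_ne n j with rfl | h
        · simp [pderiv_one]
        · simp [pderiv_X_of_ne h]
      have hj : pderiv j (pderiv i (X n : MvPolynomial σ R)) = 0 := by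
        rcases eq_or_ne n i with rfl | h
        · simp [pderiv_one]
        · simp [pderiv_X_of_ne h]
      rw [hi, hj]
      ring

/-- **Topological recursion relations imply WDVV.**
`H` is a formal polynomial over a commutative ring `R` in the `2(r+1)` variables
`t_i^α`, `i ∈ {0,1}`, `α ∈ {0,…,r}`, encoded as `MvPolynomial (Fin 2 × Fin (r+1)) R`,
where the variable `(i, α)` stands for `t_i^α`.  Assume `η` is a symmetric
`(r+1)×(r+1)` matrix over `R` and `H` satisfies the genus zero topological recursion
relations.  Then `H` satisfies the WDVV equations in the `t_0` variables. -/
theorem trr_implies_wdvv {R : Type*} [CommRing R] (r : ℕ)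
    (H : MvPolynomial (Fin 2 × Fin (r + 1)) R)
    (η : Fin (r + 1) → Fin (r + 1) → R)
    (hη : ∀ α β, η α β = η β α)
    (hTRR : ∀ α₁ α₂ α₃ : Fin (r + 1),
      pderiv (1, α₁) (pderiv (0, α₂) (pderiv (0, α₃) H)) =
        ∑ σ₁ : Fin (r + 1), ∑ σ₂ : Fin (r + 1),
          pderiv (0, α₁) (pderiv (0, σ₁) H) * C (η σ₁ σ₂) *
            pderiv (0, σ₂) (pderiv (0, α₂) (pderiv (0, α₃) H))) :
    ∀ a b c d : Fin (r + 1),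
      ∑ e : Fin (r + 1), ∑ f : Fin (r + 1),
          pderiv (0, a) (pderiv (0, b) (pderiv (0, e) H)) * C (η e f) *
            pderiv (0, f) (pderiv (0, c) (pderiv (0, d) H)) =
        ∑ e : Fin (r + 1), ∑ f : Fin (r + 1),
          pderiv (0, b) (pderiv (0, c) (pderiv (0, e) H)) * C (η e f) *
            pderiv (0, f) (pderiv (0, a) (pderiv (0, d) H)) := by
  have key : ∀ p u q v : Fin (r + 1),
      (∑ e : Fin (r + 1), ∑ f : Fin (r + 1),
          pderiv (0, u) (pderiv (0, p) (pderiv (0, e) H)) * C (η e f) *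
            pderiv (0, f) (pderiv (0, q) (pderiv (0, v) H))) =
        ∑ e : Fin (r + 1), ∑ f : Fin (r + 1),
          pderiv (0, q) (pderiv (0, p) (pderiv (0, e) H)) * C (η e f) *
            pderiv (0, f) (pderiv (0, u) (pderiv (0, v) H)) := by
    intro p u q v
    have h1 := congrArg (pderiv ((0 : Fin 2), u)) (hTRR p q v)
    have h2 := congrArg (pderiv ((0 : Fin 2), q)) (hTRR p u v)
    simp only [map_sum, pderiv_mul, pderiv_C, mul_zero, add_zero] at h1 h2
    have hL : pderiv ((0 : Fin 2), u) (pderiv ((1 : Fin 2), p)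
          (pderiv ((0 : Fin 2), q) (pderiv ((0 : Fin 2), v) H))) =
        pderiv ((0 : Fin 2), q) (pderiv ((1 : Fin 2), p)
          (pderiv ((0 : Fin 2), u) (pderiv ((0 : Fin 2), v) H))) := by
      rw [my_pderiv_comm ((0 : Fin 2), u) ((1 : Fin 2), p),
        my_pderiv_comm ((0 : Fin 2), q) ((1 : Fin 2), p),
        my_pderiv_comm ((0 : Fin 2), u) ((0 : Fin 2), q)]
    rw [hL] at h1
    have h3 := h1.symm.trans h2
    simp only [Finset.sum_add_distrib] at h3
    have hY : (∑ e : Fin (r + 1), ∑ f : Fin (r + 1),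
          pderiv ((0 : Fin 2), p) (pderiv ((0 : Fin 2), e) H) * C (η e f) *
            pderiv ((0 : Fin 2), u) (pderiv ((0 : Fin 2), f)
              (pderiv ((0 : Fin 2), q) (pderiv ((0 : Fin 2), v) H)))) =
        ∑ e : Fin (r + 1), ∑ f : Fin (r + 1),
          pderiv ((0 : Fin 2), p) (pderiv ((0 : Fin 2), e) H) * C (η e f) *
            pderiv ((0 : Fin 2), q) (pderiv ((0 : Fin 2), f)
              (pderiv ((0 : Fin 2), u) (pderiv ((0 : Fin 2), v) H))) := by
      refine Finset.sum_congr rfl fun e _ => Finset.sum_congr rfl fun f _ => ?_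
      congr 1
      rw [my_pderiv_comm ((0 : Fin 2), u) ((0 : Fin 2), f),
        my_pderiv_comm ((0 : Fin 2), u) ((0 : Fin 2), q),
        my_pderiv_comm ((0 : Fin 2), f) ((0 : Fin 2), q)]
    rw [hY] at h3
    exact add_right_cancel h3
  intro a b c d
  rw [key b a c d]
  exact Finset.sum_congr rfl fun e _ => Finset.sum_congr rfl fun f _ => by
    rw [my_pderiv_comm ((0 : Fin 2), c) ((0 : Fin 2), b)]
end

section
/- Let h : {1, 2, 3, …} → ℚ be any sequence, let G(q,s) = Σ_{n≥1} h_n qⁿ s^{2n−2}/(2n−2)! be the corresponding formal power series in ℚ[[q,s]], and let D = q·∂/∂q. Then the differential equation ∂/∂s (D²G) = 2s · (D²G) · (D³G) holds in ℚ[[q,s]] if and only if for every n ≥ 1 the recursion h_{n+1} = Σ_{l=1}^{n} ((2n−1)! · l² · (n+1−l)²) / ((2l−2)! · (2(n−l))! · (n+1)) · h_l · h_{n+1−l} holds. -/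
/-- The Euler-type derivation `D = q·∂/∂q` on `ℚ[[q,s]]`, where the variable `q`
corresponds to the index `0` and `s` to the index `1`. -/
noncomputable def Dq (F : MvPowerSeries (Fin 2) ℚ) : MvPowerSeries (Fin 2) ℚ :=
  fun m => (m 0 : ℚ) * MvPowerSeries.coeff m F

/-- The formal partial derivative `∂/∂s` on `ℚ[[q,s]]`. -/
noncomputable def Ds (F : MvPowerSeries (Fin 2) ℚ) : MvPowerSeries (Fin 2) ℚ :=
  fun m => ((m 1 : ℚ) + 1) * MvPowerSeries.coeff (m + Finsupp.single 1 1) F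

/-- The generating series `G(q,s) = Σ_{n ≥ 1} h_n qⁿ s^{2n−2}/(2n−2)!` in `ℚ[[q,s]]`. -/
noncomputable def genSeries (h : ℕ → ℚ) : MvPowerSeries (Fin 2) ℚ :=
  fun m => if 1 ≤ m 0 ∧ m 1 = 2 * m 0 - 2
    then h (m 0) / ((2 * m 0 - 2).factorial : ℚ) else 0

/-! Every series in the equation has the shape `Σₙ cₙ qⁿ s^{2n−k}` (`diagSeries k c`): `D` multiplies
`cₙ` by `n`, `∂/∂s` raises `k` by one, a product adds the `k`'s and convolves the `c`'s, and
multiplication by `s` lowers an even `k` by one. Both sides therefore have `k = 3`, and the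
coefficient of `q^{n+1} s^{2n−1}` reads `2n (n+1)² c_{n+1} = 2 Σ_{i+j=n+1} i² cᵢ · j³ cⱼ`.
Symmetrising under `i ↔ j` replaces `2 i² j³` by `(n+1) i² j²`, and clearing the factorials in
`cₙ = hₙ/(2n−2)!` gives the recursion. -/
open MvPowerSeries Finset

/-- `Σₙ cₙ qⁿ s^{2n−k}`; the values `cₙ` with `2n < k` do not enter. -/
noncomputable def diagSeries (k : ℕ) (c : ℕ → ℚ) : MvPowerSeries (Fin 2) ℚ :=
  fun m => if m 1 + k = 2 * m 0 then c (m 0) else 0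

noncomputable def genCoeff (h : ℕ → ℚ) (n : ℕ) : ℚ :=
  h n / (2 * n - 2).factorial

section DiagSeries

variable {k : ℕ} {c : ℕ → ℚ}

lemma coeff_diagSeries (m : Fin 2 →₀ ℕ) :
    coeff m (diagSeries k c) = if m 1 + k = 2 * m 0 then c (m 0) else 0 :=
  rfl

lemma genSeries_eq_diagSeries (h : ℕ → ℚ) : genSeries h = diagSeries 2 (genCoeff h) := by
  ext m
  exact if_congr (by omega) rfl rfl

lemma Dq_diagSeries : Dq (diagSeries k c) = diagSeries k (fun n => n * c n) := by
  ext m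
  rw [coeff_diagSeries, ← mul_ite_zero]
  rfl

lemma Ds_diagSeries :
    Ds (diagSeries k c) = diagSeries (k + 1) (fun n => (2 * n - k : ℚ) * c n) := by
  ext m
  change ((m 1 : ℚ) + 1) * coeff (m + Finsupp.single 1 1) (diagSeries k c) = _
  simp only [coeff_diagSeries, Finsupp.add_apply, Finsupp.single_eq_same,
    Finsupp.single_eq_of_ne' (show (1 : Fin 2) ≠ 0 by decide), add_zero]
  by_cases hm : m 1 + (k + 1) = 2 * m 0
  · have hq : (m 1 : ℚ) + 1 = 2 * m 0 - k := by
      rw [eq_sub_iff_add_eq]; exact_mod_cast (by omega : m 1 + 1 + k = 2 * m 0)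
    rw [if_pos (by omega), if_pos hm, hq]
  · rw [if_neg (by omega), if_neg hm, mul_zero]

lemma C_mul_diagSeries (a : ℚ) : C a * diagSeries k c = diagSeries k (fun n => a * c n) := by
  ext m
  rw [coeff_C_mul, coeff_diagSeries, coeff_diagSeries, mul_ite_zero]

lemma X_one_mul_diagSeries (hk : Odd k) : X 1 * diagSeries (k + 1) c = diagSeries k c := by
  ext m
  obtain ⟨j, rfl⟩ := hk
  rw [X_def, coeff_monomial_mul, one_mul, coeff_diagSeries, coeff_diagSeries]
  by_cases hm : 1 ≤ m 1
  · rw [if_pos (Finsupp.single_le_iff.2 hm)]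
    simp only [Finsupp.tsub_apply, Finsupp.single_eq_same,
      Finsupp.single_eq_of_ne' (show (1 : Fin 2) ≠ 0 by decide), tsub_zero]
    exact if_congr (by omega) rfl rfl
  · rw [if_neg (mt Finsupp.single_le_iff.1 hm), if_neg (by omega)]

lemma diagSeries_eq_diagSeries_iff {d : ℕ → ℚ} :
    diagSeries k c = diagSeries k d ↔ ∀ n, k ≤ 2 * n → c n = d n := by
  constructor
  · intro H n hn
    have := congrArg (coeff (Finsupp.single 0 n + Finsupp.single 1 (2 * n - k))) H
    simpa [coeff_diagSeries, Finsupp.single_apply, show 2 * n - k + k = 2 * n by omega] using this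
  · intro H
    ext m
    rw [coeff_diagSeries, coeff_diagSeries]
    split_ifs with hm
    · exact H _ (by omega)
    · rfl

lemma coeff_diagSeries_ne_zero_iff {m : Fin 2 →₀ ℕ} :
    coeff m (diagSeries k c) ≠ 0 ↔ m 1 + k = 2 * m 0 ∧ c (m 0) ≠ 0 := by
  rw [coeff_diagSeries]
  split_ifs with hm <;> simp [hm]

lemma diagSeries_mul_diagSeries {j : ℕ} {d : ℕ → ℚ}
    (hc : ∀ n, 2 * n < k → c n = 0) (hd : ∀ n, 2 * n < j → d n = 0) :
    diagSeries k c * diagSeries j d =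
      diagSeries (k + j) (fun n => ∑ p ∈ antidiagonal n, c p.1 * d p.2) := by
  ext m
  rw [coeff_mul, coeff_diagSeries]
  have support {p : (Fin 2 →₀ ℕ) × (Fin 2 →₀ ℕ)}
      (hp : coeff p.1 (diagSeries k c) * coeff p.2 (diagSeries j d) ≠ 0) :
      (p.1 1 + k = 2 * p.1 0 ∧ c (p.1 0) ≠ 0) ∧ (p.2 1 + j = 2 * p.2 0 ∧ d (p.2 0) ≠ 0) := by
    rw [mul_ne_zero_iff, coeff_diagSeries_ne_zero_iff, coeff_diagSeries_ne_zero_iff] at hp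
    exact hp
  split_ifs with hm
  · refine sum_bij_ne_zero (fun p _ _ => (p.1 0, p.2 0)) ?_ ?_ ?_ ?_
    · intro p hp _
      rw [HasAntidiagonal.mem_antidiagonal] at hp ⊢
      rw [← hp, Finsupp.add_apply]
    · intro p hp hp0 q hq hq0 hpq
      obtain ⟨⟨hp1, -⟩, hp2, -⟩ := support hp0
      obtain ⟨⟨hq1, -⟩, hq2, -⟩ := support hq0
      simp only [Prod.mk.injEq] at hpq
      exact Prod.ext (Finsupp.ext (Fin.forall_fin_two.2 ⟨hpq.1, by omega⟩))
        (Finsupp.ext (Fin.forall_fin_two.2 ⟨hpq.2, by omega⟩))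
    · rintro ⟨a, b⟩ hab hne
      rw [HasAntidiagonal.mem_antidiagonal] at hab
      obtain ⟨hca, hdb⟩ := mul_ne_zero_iff.1 hne
      have ha : k ≤ 2 * a := by by_contra! h; exact hca (hc a h)
      have hb : j ≤ 2 * b := by by_contra! h; exact hdb (hd b h)
      refine ⟨(Finsupp.single 0 a + Finsupp.single 1 (2 * a - k),
        Finsupp.single 0 b + Finsupp.single 1 (2 * b - j)), ?_, ?_, ?_⟩
      · rw [HasAntidiagonal.mem_antidiagonal]
        refine Finsupp.ext (Fin.forall_fin_two.2 ⟨?_, ?_⟩) <;>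
          simp <;> omega
      · simp [coeff_diagSeries, hca, hdb, ha, hb]
      · simp
    · intro p _ hp
      obtain ⟨⟨hp1, -⟩, hp2, -⟩ := support hp
      rw [coeff_diagSeries, coeff_diagSeries, if_pos hp1, if_pos hp2]
  · refine sum_eq_zero fun p hp => ?_
    by_contra hne
    obtain ⟨⟨hp1, -⟩, hp2, -⟩ := support hne
    rw [HasAntidiagonal.mem_antidiagonal] at hp
    have h0 := congrArg (· 0) hp
    have h1 := congrArg (· 1) hp
    simp only [Finsupp.add_apply] at h0 h1
    omega

end DiagSeries

lemma two_mul_sum_antidiagonal_sq_mul_cube {R : Type*} [CommSemiring R] (x : ℕ → R) (N : ℕ) :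
    2 * ∑ p ∈ antidiagonal N, ((p.1 : R) ^ 2 * x p.1) * ((p.2 : R) ^ 3 * x p.2) =
      N * ∑ p ∈ antidiagonal N, (p.1 : R) ^ 2 * (p.2 : R) ^ 2 * x p.1 * x p.2 := by
  rw [two_mul]
  conv_lhs => arg 2; rw [← Nat.sum_antidiagonal_swap]
  rw [← sum_add_distrib, mul_sum]
  refine sum_congr rfl fun p hp => ?_
  rw [← HasAntidiagonal.mem_antidiagonal.1 hp, Prod.fst_swap, Prod.snd_swap]
  push_cast
  ring

lemma sum_antidiagonal_succ_eq_sum_Icc {M : Type*} [AddCommMonoid M] (f : ℕ → ℕ → M) (n : ℕ)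
    (hf₁ : ∀ j, f 0 j = 0) (hf₂ : ∀ i, f i 0 = 0) :
    ∑ p ∈ antidiagonal (n + 1), f p.1 p.2 = ∑ l ∈ Icc 1 n, f l (n + 1 - l) := by
  rw [Nat.sum_antidiagonal_eq_sum_range_succ]
  refine (sum_subset (fun l hl => ?_) fun l hl hl' => ?_).symm
  · simp only [mem_Icc, mem_range] at hl ⊢
    omega
  · simp only [mem_Icc, mem_range] at hl hl'
    obtain rfl | rfl : l = 0 ∨ l = n + 1 := by omega
    · exact hf₁ _
    · simpa using hf₂ _

lemma recursion_step_iff (h : ℕ → ℚ) {n : ℕ} (hn : 1 ≤ n) :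
    (2 * ((n + 1 : ℕ) : ℚ) - 2) * (((n + 1 : ℕ) : ℚ) ^ 2 * genCoeff h (n + 1)) =
        2 * ∑ p ∈ antidiagonal (n + 1),
          ((p.1 : ℚ) ^ 2 * genCoeff h p.1) * ((p.2 : ℚ) ^ 3 * genCoeff h p.2) ↔
      h (n + 1) = ∑ l ∈ Icc 1 n,
        (((2 * n - 1).factorial : ℚ) * (l : ℚ) ^ 2 * ((n + 1 - l : ℕ) : ℚ) ^ 2) /
            (((2 * l - 2).factorial : ℚ) * ((2 * (n - l)).factorial : ℚ) * ((n : ℚ) + 1)) *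
          h l * h (n + 1 - l) := by
  set S := ∑ l ∈ Icc 1 n,
    (l : ℚ) ^ 2 * ((n + 1 - l : ℕ) : ℚ) ^ 2 * genCoeff h l * genCoeff h (n + 1 - l)
  have hS : 2 * ∑ p ∈ antidiagonal (n + 1),
      ((p.1 : ℚ) ^ 2 * genCoeff h p.1) * ((p.2 : ℚ) ^ 3 * genCoeff h p.2) = (n + 1) * S := by
    rw [two_mul_sum_antidiagonal_sq_mul_cube, sum_antidiagonal_succ_eq_sum_Icc
      (fun i j => (i : ℚ) ^ 2 * (j : ℚ) ^ 2 * genCoeff h i * genCoeff h j) n (by simp) (by simp)]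
    push_cast
    rfl
  have hrec : ∑ l ∈ Icc 1 n,
      (((2 * n - 1).factorial : ℚ) * (l : ℚ) ^ 2 * ((n + 1 - l : ℕ) : ℚ) ^ 2) /
          (((2 * l - 2).factorial : ℚ) * ((2 * (n - l)).factorial : ℚ) * ((n : ℚ) + 1)) *
        h l * h (n + 1 - l) = (2 * n - 1).factorial / (n + 1) * S := by
    rw [mul_sum]
    refine sum_congr rfl fun l _ => ?_
    rw [genCoeff, genCoeff, show 2 * (n + 1 - l) - 2 = 2 * (n - l) by omega]
    field_simp
  have hfact : ((2 * (n + 1) - 2).factorial : ℚ) = 2 * n * (2 * n - 1).factorial := by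
    rw [show 2 * (n + 1) - 2 = 2 * n by omega, ← Nat.mul_factorial_pred (by omega)]
    push_cast
    ring
  have hF : ((2 * n - 1).factorial : ℚ) ≠ 0 := by positivity
  have hn₀ : (n : ℚ) ≠ 0 := by positivity
  have hn₁ : (n : ℚ) + 1 ≠ 0 := by positivity
  rw [hS, hrec, genCoeff, hfact]
  push_cast
  constructor <;> intro H
  · field_simp at H ⊢
    exact mul_left_cancel₀ hn₀ (by linear_combination H)
  · rw [H]
    field_simp
    ring

/-- **Reduced topological recursion relation for `ℂP¹` ⟺ quadratic recursion.**
For any sequence `h` of rational numbers, the formal differential equation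
`∂/∂s(D²G) = 2s·(D²G)·(D³G)` for `G = Σ_{n≥1} h_n qⁿ s^{2n−2}/(2n−2)!` holds in
`ℚ[[q,s]]` iff `h` satisfies the recursion
`h_{n+1} = Σ_{l=1}^{n} ((2n−1)!·l²·(n+1−l)²)/((2l−2)!·(2(n−l))!·(n+1))·h_l·h_{n+1−l}`
for all `n ≥ 1`. -/
theorem trr_CP1_iff_recursion (h : ℕ → ℚ) :
    Ds (Dq (Dq (genSeries h))) =
        2 * MvPowerSeries.X 1 * Dq (Dq (genSeries h)) * Dq (Dq (Dq (genSeries h))) ↔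
      ∀ n : ℕ, 1 ≤ n →
        h (n + 1) = ∑ l ∈ Finset.Icc 1 n,
          (((2 * n - 1).factorial : ℚ) * (l : ℚ) ^ 2 * ((n + 1 - l : ℕ) : ℚ) ^ 2) /
              (((2 * l - 2).factorial : ℚ) * ((2 * (n - l)).factorial : ℚ) * ((n : ℚ) + 1)) *
            h l * h (n + 1 - l) := by
  have hD2 : Dq (Dq (genSeries h)) = diagSeries 2 (fun n => (n : ℚ) ^ 2 * genCoeff h n) := by
    simp only [genSeries_eq_diagSeries, Dq_diagSeries, ← mul_assoc, ← sq]
  have hD3 : Dq (Dq (Dq (genSeries h))) = diagSeries 2 (fun n => (n : ℚ) ^ 3 * genCoeff h n) := by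
    simp only [hD2, Dq_diagSeries, ← mul_assoc, ← pow_succ']
  have hlhs : Ds (Dq (Dq (genSeries h))) =
      diagSeries 3 (fun n => (2 * n - 2 : ℚ) * ((n : ℚ) ^ 2 * genCoeff h n)) := by
    rw [hD2, Ds_diagSeries, Nat.cast_ofNat]
  have hrhs : 2 * X 1 * Dq (Dq (genSeries h)) * Dq (Dq (Dq (genSeries h))) =
      diagSeries 3 (fun n => 2 * ∑ p ∈ antidiagonal n,
        ((p.1 : ℚ) ^ 2 * genCoeff h p.1) * ((p.2 : ℚ) ^ 3 * genCoeff h p.2)) := by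
    have hzero (r : ℕ) : ∀ n : ℕ, 2 * n < 2 → (n : ℚ) ^ (r + 1) * genCoeff h n = 0 :=
      fun n hn => by simp [show n = 0 by omega]
    rw [hD3, hD2, mul_assoc _ (diagSeries _ _), diagSeries_mul_diagSeries (hzero 1) (hzero 2),
      ← map_ofNat C 2, mul_comm (C 2), mul_assoc, C_mul_diagSeries]
    exact X_one_mul_diagSeries (k := 3) ⟨1, rfl⟩
  rw [hlhs, hrhs, diagSeries_eq_diagSeries_iff]
  constructor
  · intro H n hn
    exact (recursion_step_iff h hn).1 (H (n + 1) (by omega))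
  · intro H N hN
    obtain ⟨n, rfl⟩ : ∃ n, N = n + 1 := ⟨N - 1, by omega⟩
    exact (recursion_step_iff h (by omega)).2 (H n (by omega))
end

section
/- Let h : {1, 2, 3, …} → ℚ satisfy h₁ = 1 and the recursion h_{n+1} = Σ_{l=1}^{n} ((2n−1)! · l² · (n+1−l)²) / ((2l−2)! · (2(n−l))! · (n+1)) · h_l · h_{n+1−l} for all n ≥ 1. Define the one-variable formal power series φ(z) = Σ_{n≥1} n·h_n·zⁿ/(2n−2)! ∈ ℚ[[z]]. Then φ satisfies the first-order ordinary differential equation z²·(φ′)² − 2z·φ′ + 2φ = 0 in ℚ[[z]]. -/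
open PowerSeries

/-- The one-variable series `φ(z) = Σ_{n≥1} n·h_n·zⁿ/(2n−2)!` in `ℚ[[z]]`
(the `n = 0` term vanishes because of the factor `n`). -/
noncomputable def phiSeries (h : ℕ → ℚ) : PowerSeries ℚ :=
  PowerSeries.mk fun n => (n : ℚ) * h n / ((2 * n - 2).factorial : ℚ)

/-!
Put `ψ = z·φ′ = Σ cₙ·zⁿ` with `cₙ = n²·hₙ/(2n−2)!`. The ODE reads `ψ² = 2(ψ − φ)`, and
`ψ − φ = Σ n(n−1)·hₙ·zⁿ/(2n−2)!`. Since `c₀ = 0`, the coefficient of `z^{n+1}` in `ψ²` is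
`Σ_{l=1}^{n} c_l·c_{n+1−l}`, which is exactly `(n+1)/(2n−1)!` times the right-hand side of the
recursion; by the recursion this is `(n+1)·h_{n+1}/(2n−1)! = 2(n+1)n·h_{n+1}/(2n)!`.
-/

theorem Finset.Nat.sum_antidiagonal_succ_eq_sum_Icc {R : Type*} [NonUnitalNonAssocSemiring R]
    (c : ℕ → R) (hc : c 0 = 0) (n : ℕ) :
    ∑ p ∈ antidiagonal (n + 1), c p.1 * c p.2 =
      ∑ l ∈ Finset.Icc 1 n, c l * c (n + 1 - l) := by
  rw [Finset.Nat.sum_antidiagonal_eq_sum_range_succ (fun i j => c i * c j)]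
  refine (Finset.sum_subset (fun l hl => ?_) fun l hl hl' => ?_).symm
  · simp only [Finset.mem_Icc, Finset.mem_range] at hl ⊢
    omega
  · simp only [Finset.mem_Icc, Finset.mem_range, not_and, not_le] at hl hl'
    obtain rfl | rfl : l = 0 ∨ l = n + 1 := by omega
    all_goals simp [hc]

noncomputable def psiSeries (h : ℕ → ℚ) : PowerSeries ℚ :=
  PowerSeries.mk fun n => (n : ℚ) ^ 2 * h n / ((2 * n - 2).factorial : ℚ)

def recursionSum (h : ℕ → ℚ) (n : ℕ) : ℚ :=
  ∑ l ∈ Finset.Icc 1 n,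
    (((2 * n - 1).factorial : ℚ) * (l : ℚ) ^ 2 * ((n + 1 - l : ℕ) : ℚ) ^ 2) /
        (((2 * l - 2).factorial : ℚ) * ((2 * (n - l)).factorial : ℚ) * ((n : ℚ) + 1)) *
      h l * h (n + 1 - l)

theorem X_mul_derivative_phiSeries (h : ℕ → ℚ) :
    X * d⁄dX ℚ (phiSeries h) = psiSeries h := by
  ext (_ | n)
  · simp [psiSeries]
  · rw [coeff_succ_X_mul, coeff_derivative, phiSeries, psiSeries, coeff_mk, coeff_mk]
    push_cast
    ring

theorem psiSeries_sub_phiSeries (h : ℕ → ℚ) :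
    psiSeries h - phiSeries h =
      PowerSeries.mk fun n => (n : ℚ) * (n - 1) * h n / ((2 * n - 2).factorial : ℚ) := by
  ext n
  simp only [psiSeries, phiSeries, map_sub, coeff_mk]
  ring

theorem coeff_succ_psiSeries_sq (h : ℕ → ℚ) (n : ℕ) :
    coeff (n + 1) (psiSeries h ^ 2) =
      ((n : ℚ) + 1) / ((2 * n - 1).factorial : ℚ) * recursionSum h n := by
  rw [sq, coeff_mul, Finset.Nat.sum_antidiagonal_succ_eq_sum_Icc (coeff · (psiSeries h))
    (by simp [psiSeries]), recursionSum, Finset.mul_sum]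
  refine Finset.sum_congr rfl fun l hl => ?_
  rw [Finset.mem_Icc] at hl
  have hfac : 2 * (n + 1 - l) - 2 = 2 * (n - l) := by omega
  simp only [psiSeries, coeff_mk, hfac]
  have : ((2 * n - 1).factorial : ℚ) ≠ 0 := by positivity
  field_simp

theorem psiSeries_sq (h : ℕ → ℚ) (hrec : ∀ n : ℕ, 1 ≤ n → h (n + 1) = recursionSum h n) :
    psiSeries h ^ 2 = 2 * (psiSeries h - phiSeries h) := by
  rw [psiSeries_sub_phiSeries]
  ext (_ | n)
  · simp [sq, psiSeries]
  rw [coeff_succ_psiSeries_sq, ← map_ofNat (C (R := ℚ)) 2, coeff_C_mul, coeff_mk]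
  rcases Nat.eq_zero_or_pos n with rfl | hn
  · simp [recursionSum]
  rw [← hrec n hn, show 2 * (n + 1) - 2 = 2 * n - 1 + 1 by omega, Nat.factorial_succ,
    show 2 * n - 1 + 1 = 2 * n by omega]
  have : ((2 * n - 1).factorial : ℚ) ≠ 0 := by positivity
  push_cast
  field_simp
  ring

theorem phi_satisfies_ode_general (h : ℕ → ℚ)
    (hrec : ∀ n : ℕ, 1 ≤ n →
      h (n + 1) = ∑ l ∈ Finset.Icc 1 n,
        (((2 * n - 1).factorial : ℚ) * (l : ℚ) ^ 2 * ((n + 1 - l : ℕ) : ℚ) ^ 2) /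
            (((2 * l - 2).factorial : ℚ) * ((2 * (n - l)).factorial : ℚ) * ((n : ℚ) + 1)) *
          h l * h (n + 1 - l)) :
    (X : PowerSeries ℚ) ^ 2 * (derivativeFun (phiSeries h)) ^ 2 -
        2 * X * derivativeFun (phiSeries h) + 2 * phiSeries h = 0 := by
  have hψ : X * derivativeFun (phiSeries h) = psiSeries h := X_mul_derivative_phiSeries h
  linear_combination (X * derivativeFun (phiSeries h) + psiSeries h - 2) * hψ + psiSeries_sq h hrec

/-- **The ODE satisfied by the reduced `ℂP¹` potential.**
If `h₁ = 1` and `h` satisfies the recursion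
`h_{n+1} = Σ_{l=1}^{n} ((2n−1)!·l²·(n+1−l)²)/((2l−2)!·(2(n−l))!·(n+1))·h_l·h_{n+1−l}`
for all `n ≥ 1`, then `φ(z) = Σ_{n≥1} n·h_n·zⁿ/(2n−2)!` satisfies the first-order ODE
`z²·(φ′)² − 2z·φ′ + 2φ = 0` in `ℚ[[z]]`. -/
theorem phi_satisfies_ode (h : ℕ → ℚ) (h1 : h 1 = 1)
    (hrec : ∀ n : ℕ, 1 ≤ n →
      h (n + 1) = ∑ l ∈ Finset.Icc 1 n,
        (((2 * n - 1).factorial : ℚ) * (l : ℚ) ^ 2 * ((n + 1 - l : ℕ) : ℚ) ^ 2) /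
            (((2 * l - 2).factorial : ℚ) * ((2 * (n - l)).factorial : ℚ) * ((n : ℚ) + 1)) *
          h l * h (n + 1 - l)) :
    (X : PowerSeries ℚ) ^ 2 * (derivativeFun (phiSeries h)) ^ 2 -
        2 * X * derivativeFun (phiSeries h) + 2 * phiSeries h = 0 :=
  phi_satisfies_ode_general h hrec
end
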